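/- arXiv:1001.5073 — 6 statements merged into one kernel-verified Lean document; each statement's English description precedes it below -/
import Mathlib

section
/- Let A be a real n×m matrix with n < m satisfying the URP, and let 1 ≤ n0 ≤ n. Then γ_A(n0) ≤ max over nonempty index sets I ⊆ {1,…,m} with |I| ≤ n0 of σ_max(A_{I^c})² / σ_min(A_I)², where σ_min(·) and σ_max(·) denote the smallest and largest singular values of a matrix. -/
open Finset
open scoped BigOperators

noncomputable section

/-- Squared Euclidean norm of a vector. -/
def nsq {ι : Type*} [Fintype ι] (s : ι → ℝ) : ℝ := ∑ i, (s i) ^ 2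

/-- The Unique Representation Property: every `n × n` submatrix of `A` is invertible. -/
def URP {n m : ℕ} (A : Matrix (Fin n) (Fin m) ℝ) : Prop :=
  ∀ g : Fin n → Fin m, Function.Injective g → IsUnit (A.submatrix id g)

/-- Number of nonzero components (the ℓ⁰ "norm"). -/
def l0 {ι : Type*} [Fintype ι] (s : ι → ℝ) : ℕ :=
  (Finset.univ.filter fun i => s i ≠ 0).card

/-- Number of components with absolute value greater than σ. -/
def l0s {ι : Type*} [Fintype ι] (s : ι → ℝ) (σ : ℝ) : ℕ :=
  (Finset.univ.filter fun i => σ < |s i|).card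

/-- The set of ratios ‖π_I(s)‖²/‖π_{Iᶜ}(s)‖² over index sets `I` with `|I| ≤ n0`
and nonzero null-space vectors `s`. -/
def gammaSet {n m : ℕ} (A : Matrix (Fin n) (Fin m) ℝ) (n0 : ℕ) : Set ℝ :=
  {r | ∃ (I : Finset (Fin m)) (s : Fin m → ℝ), I.card ≤ n0 ∧ A.mulVec s = 0 ∧ s ≠ 0 ∧
    r = (∑ i ∈ I, (s i) ^ 2) / (∑ i ∈ Iᶜ, (s i) ^ 2)}

/-- γ_A(n0), the supremum of the above set of ratios. -/
def gammaA {n m : ℕ} (A : Matrix (Fin n) (Fin m) ℝ) (n0 : ℕ) : ℝ :=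
  sSup (gammaSet A n0)

/-- Square of the largest singular value of a matrix (Rayleigh quotient form). -/
def sMaxSq {p q : Type*} [Fintype p] [Fintype q] (B : Matrix p q ℝ) : ℝ :=
  sSup {r | ∃ v : q → ℝ, nsq v = 1 ∧ r = nsq (B.mulVec v)}

/-- Square of the smallest singular value of a matrix with at least as many rows as
columns (Rayleigh quotient form). -/
def sMinSq {p q : Type*} [Fintype p] [Fintype q] (B : Matrix p q ℝ) : ℝ :=
  sInf {r | ∃ v : q → ℝ, nsq v = 1 ∧ r = nsq (B.mulVec v)}

/-- The quadratic spline f_γ. -/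
def fsp (γ u : ℝ) : ℝ :=
  if |u| ≤ 1 then 1 - u ^ 2 / (1 + γ)
  else if |u| ≤ 1 + γ then (|u| - γ - 1) ^ 2 / (γ ^ 2 + γ)
  else 0

/-- F_{γ,σ}(s) = Σ_i f_γ(s_i/σ). -/
def Fsp {m : ℕ} (γ σ : ℝ) (s : Fin m → ℝ) : ℝ := ∑ i, fsp γ (s i / σ)

/-- The piecewise second derivative g_γ of f_γ. -/
def gsp (γ u : ℝ) : ℝ :=
  if |u| ≤ 1 then -2 / (1 + γ)
  else if |u| ≤ 1 + γ then 2 / (γ ^ 2 + γ)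
  else 0

/-- The derivative f_γ′. -/
def fspDeriv (γ u : ℝ) : ℝ :=
  if |u| ≤ 1 then -2 * u / (1 + γ)
  else if |u| ≤ 1 + γ then 2 * (|u| - γ - 1) / (γ ^ 2 + γ) * Real.sign u
  else 0

/-- The gradient of F_{γ,σ}: its i-th component is (1/σ)·f_γ′(s_i/σ). -/
def gradF {m : ℕ} (γ σ : ℝ) (s : Fin m → ℝ) : Fin m → ℝ :=
  fun i => fspDeriv γ (s i / σ) / σ

/-- The lower asymmetric restricted isometry constant δ_k^{min} of `A`. -/
def aricMin {n m : ℕ} (A : Matrix (Fin n) (Fin m) ℝ) (k : ℕ) : ℝ :=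
  sInf {δ : ℝ | 0 ≤ δ ∧ ∀ s : Fin m → ℝ, l0 s ≤ k → (1 - δ) * nsq s ≤ nsq (A.mulVec s)}

end

/-!
Split a null vector `s` of `A` along `I` and `Iᶜ`: then `A_I s_I = -A_{Iᶜ} s_{Iᶜ}`, so
`σ_min(A_I)² ‖s_I‖² ≤ ‖A_I s_I‖² = ‖A_{Iᶜ} s_{Iᶜ}‖² ≤ σ_max(A_{Iᶜ})² ‖s_{Iᶜ}‖²`.
For `|I| ≤ n` the URP makes the columns of `A_I` independent, so `σ_min(A_I)² > 0`: it is a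
minimum of `‖A_I v‖²` over the compact unit sphere.
-/

open Matrix

section SquaredNorm

variable {ι : Type*} [Fintype ι]

lemma nsq_nonneg (s : ι → ℝ) : 0 ≤ nsq s :=
  Finset.sum_nonneg fun _ _ => sq_nonneg _

lemma nsq_eq_zero_iff {s : ι → ℝ} : nsq s = 0 ↔ s = 0 := by
  simp [nsq, Finset.sum_eq_zero_iff_of_nonneg, sq_nonneg, funext_iff]

lemma nsq_pos {s : ι → ℝ} (hs : s ≠ 0) : 0 < nsq s :=
  (nsq_nonneg s).lt_of_ne' (nsq_eq_zero_iff.not.2 hs)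

lemma nsq_smul (c : ℝ) (s : ι → ℝ) : nsq (c • s) = c ^ 2 * nsq s := by
  simp [nsq, mul_pow, Finset.mul_sum]

lemma nsq_neg (s : ι → ℝ) : nsq (-s) = nsq s := by
  simp [nsq]

lemma continuous_nsq : Continuous (nsq : (ι → ℝ) → ℝ) := by
  unfold nsq
  fun_prop

lemma isCompact_nsq_eq_one : IsCompact {v : ι → ℝ | nsq v = 1} := by
  refine Metric.isCompact_of_isClosed_isBounded (isClosed_eq continuous_nsq continuous_const) ?_
  refine (Metric.isBounded_iff_subset_closedBall 0).2 ⟨1, fun v hv => ?_⟩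
  rw [Metric.mem_closedBall, dist_zero_right, pi_norm_le_iff_of_nonneg zero_le_one]
  intro i
  rw [Real.norm_eq_abs, ← sq_le_one_iff_abs_le_one]
  exact hv ▸ Finset.single_le_sum (fun j _ => sq_nonneg (v j)) (Finset.mem_univ i)

end SquaredNorm

lemma nsq_subtype_finset {ι : Type*} (s : ι → ℝ) (I : Finset ι) :
    nsq (fun j : I => s j) = ∑ i ∈ I, s i ^ 2 :=
  Finset.sum_coe_sort I fun i => s i ^ 2

section Rayleigh

variable {p q : Type*} [Fintype p] [Fintype q] (B : Matrix p q ℝ)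

lemma isCompact_rayleigh : IsCompact {r | ∃ v : q → ℝ, nsq v = 1 ∧ r = nsq (B *ᵥ v)} := by
  have hS : {r | ∃ v : q → ℝ, nsq v = 1 ∧ r = nsq (B *ᵥ v)} =
      (fun v => nsq (B *ᵥ v)) '' {v | nsq v = 1} := by
    ext r
    simp [eq_comm]
  rw [hS]
  exact isCompact_nsq_eq_one.image (continuous_nsq.comp (continuous_const.matrix_mulVec continuous_id))

lemma nsq_mulVec_div_mem_rayleigh {v : q → ℝ} (hv : v ≠ 0) :
    nsq (B *ᵥ v) / nsq v ∈ {r | ∃ v : q → ℝ, nsq v = 1 ∧ r = nsq (B *ᵥ v)} := by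
  refine ⟨(√(nsq v))⁻¹ • v, ?_, ?_⟩
  · rw [nsq_smul, inv_pow, Real.sq_sqrt (nsq_nonneg v), inv_mul_cancel₀ (nsq_pos hv).ne']
  · rw [mulVec_smul, nsq_smul, inv_pow, Real.sq_sqrt (nsq_nonneg v), inv_mul_eq_div]

lemma nsq_mulVec_le_sMaxSq_mul (v : q → ℝ) : nsq (B *ᵥ v) ≤ sMaxSq B * nsq v := by
  rcases eq_or_ne v 0 with rfl | hv
  · simp [nsq]
  · rw [← div_le_iff₀ (nsq_pos hv)]
    exact le_csSup (isCompact_rayleigh B).bddAbove (nsq_mulVec_div_mem_rayleigh B hv)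

lemma sMinSq_mul_le_nsq_mulVec (v : q → ℝ) : sMinSq B * nsq v ≤ nsq (B *ᵥ v) := by
  rcases eq_or_ne v 0 with rfl | hv
  · simp [nsq]
  · rw [← le_div_iff₀ (nsq_pos hv)]
    exact csInf_le (isCompact_rayleigh B).bddBelow (nsq_mulVec_div_mem_rayleigh B hv)

lemma sMaxSq_nonneg : 0 ≤ sMaxSq B :=
  Real.sSup_nonneg (by rintro _ ⟨v, -, rfl⟩; exact nsq_nonneg _)

lemma sMinSq_nonneg : 0 ≤ sMinSq B :=
  Real.sInf_nonneg (by rintro _ ⟨v, -, rfl⟩; exact nsq_nonneg _)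

lemma sMinSq_pos [Nonempty q] (hB : Function.Injective B.mulVec) : 0 < sMinSq B := by
  classical
  obtain ⟨j⟩ := ‹Nonempty q›
  obtain ⟨v, hv, hmin⟩ := (isCompact_rayleigh B).sInf_mem
    ⟨_, Pi.single j 1, by simp [nsq, Pi.single_apply], rfl⟩
  rw [sMinSq, hmin]
  refine nsq_pos fun hBv => ?_
  rw [hB (hBv.trans (mulVec_zero B).symm), nsq_eq_zero_iff.2 rfl] at hv
  exact zero_ne_one hv

end Rayleigh

lemma mulVec_eq_submatrix_add_compl {R p ι : Type*} [NonUnitalNonAssocSemiring R] [Fintype ι]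
    [DecidableEq ι] (A : Matrix p ι R) (I : Finset ι) (s : ι → R) :
    A *ᵥ s = A.submatrix id (fun j : I => (j : ι)) *ᵥ (fun j : I => s j) +
      A.submatrix id (fun j : ↥Iᶜ => (j : ι)) *ᵥ (fun j : ↥Iᶜ => s j) := by
  funext i
  simp only [mulVec, dotProduct, Pi.add_apply, submatrix_apply, id]
  rw [Finset.sum_coe_sort I (fun j => A i j * s j), Finset.sum_coe_sort Iᶜ (fun j => A i j * s j),
    Finset.sum_add_sum_compl]

lemma sum_sq_div_sum_sq_compl_le {p ι : Type*} [Fintype p] [Fintype ι] [DecidableEq ι]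
    (A : Matrix p ι ℝ) {I : Finset ι} (hI : I.Nonempty)
    (hAI : Function.Injective (A.submatrix id (fun j : I => (j : ι))).mulVec)
    {s : ι → ℝ} (hs : A *ᵥ s = 0) (hs0 : s ≠ 0) :
    (∑ i ∈ I, s i ^ 2) / (∑ i ∈ Iᶜ, s i ^ 2) ≤
      sMaxSq (A.submatrix id (fun j : ↥Iᶜ => (j : ι))) /
        sMinSq (A.submatrix id (fun j : I => (j : ι))) := by
  set BI := A.submatrix id (fun j : I => (j : ι))
  set BC := A.submatrix id (fun j : ↥Iᶜ => (j : ι))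
  set x : I → ℝ := fun j => s j
  set y : ↥Iᶜ → ℝ := fun j => s j
  have hsplit : BI *ᵥ x = -(BC *ᵥ y) :=
    eq_neg_of_add_eq_zero_left ((mulVec_eq_submatrix_add_compl A I s).symm.trans hs)
  have hy : y ≠ 0 := by
    intro hy0
    have hx0 : x = 0 := hAI (by rw [hsplit, hy0, mulVec_zero, neg_zero, mulVec_zero])
    refine hs0 (funext fun j => ?_)
    by_cases hj : j ∈ I
    · exact congrFun hx0 ⟨j, hj⟩
    · exact congrFun hy0 ⟨j, Finset.mem_compl.2 hj⟩
  have : Nonempty I := hI.coe_sort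
  rw [← nsq_subtype_finset, ← nsq_subtype_finset,
    div_le_div_iff₀ (nsq_pos hy) (sMinSq_pos BI hAI)]
  calc nsq x * sMinSq BI = sMinSq BI * nsq x := mul_comm _ _
    _ ≤ nsq (BI *ᵥ x) := sMinSq_mul_le_nsq_mulVec BI x
    _ = nsq (BC *ᵥ y) := by rw [hsplit, nsq_neg]
    _ ≤ sMaxSq BC * nsq y := nsq_mulVec_le_sMaxSq_mul BC y

lemma URP.injective_mulVec_submatrix {n m : ℕ} {A : Matrix (Fin n) (Fin m) ℝ} (hA : URP A)
    (hnm : n ≤ m) {I : Finset (Fin m)} (hI : I.card ≤ n) :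
    Function.Injective (A.submatrix id (fun j : I => (j : Fin m))).mulVec := by
  obtain ⟨J, hIJ, -, hJ⟩ :=
    Finset.exists_subsuperset_card_eq I.subset_univ hI (by simpa using hnm)
  set g := J.orderEmbOfFin hJ
  have hg : LinearIndependent ℝ (A.col ∘ g) :=
    linearIndependent_cols_iff_isUnit.2 (hA g g.injective)
  rw [mulVec_injective_iff]
  refine ((linearIndepOn_range_iff g.injective A.col).2 hg).mono ?_
  rw [Finset.range_orderEmbOfFin]
  exact_mod_cast hIJ

theorem stmt_0_general {n m : ℕ} (hnm : n < m) (A : Matrix (Fin n) (Fin m) ℝ)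
    (hURP : URP A) (n0 : ℕ) (hn0 : n0 ≤ n) :
    gammaA A n0 ≤
      sSup {r : ℝ | ∃ I : Finset (Fin m), I.Nonempty ∧ I.card ≤ n0 ∧
        r = sMaxSq (A.submatrix id (fun j : {x // x ∈ Iᶜ} => (j : Fin m))) /
            sMinSq (A.submatrix id (fun j : {x // x ∈ I} => (j : Fin m)))} := by
  set T := {r : ℝ | ∃ I : Finset (Fin m), I.Nonempty ∧ I.card ≤ n0 ∧
    r = sMaxSq (A.submatrix id (fun j : {x // x ∈ Iᶜ} => (j : Fin m))) /
      sMinSq (A.submatrix id (fun j : {x // x ∈ I} => (j : Fin m)))}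
  have hT_bdd : BddAbove T := by
    refine (Set.finite_range fun I : Finset (Fin m) =>
      sMaxSq (A.submatrix id (fun j : {x // x ∈ Iᶜ} => (j : Fin m))) /
        sMinSq (A.submatrix id (fun j : {x // x ∈ I} => (j : Fin m)))).subset ?_ |>.bddAbove
    rintro r ⟨I, -, -, rfl⟩
    exact ⟨I, rfl⟩
  have hT_nonneg : 0 ≤ sSup T :=
    Real.sSup_nonneg (by rintro _ ⟨I, -, -, rfl⟩; exact div_nonneg (sMaxSq_nonneg _) (sMinSq_nonneg _))
  refine Real.sSup_le ?_ hT_nonneg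
  rintro r ⟨I, s, hI, hs, hs0, rfl⟩
  rcases I.eq_empty_or_nonempty with rfl | hIne
  · simpa using hT_nonneg
  · exact (sum_sq_div_sum_sq_compl_le A hIne (hURP.injective_mulVec_submatrix hnm.le (hI.trans hn0))
      hs hs0).trans (le_csSup hT_bdd ⟨I, hIne, hI, rfl⟩)

/-- γ_A(n0) is bounded by the max over nonempty index sets `I` with
`|I| ≤ n0` of σ_max(A_{Iᶜ})²/σ_min(A_I)². -/
theorem stmt_0 {n m : ℕ} (hnm : n < m) (A : Matrix (Fin n) (Fin m) ℝ)
    (hURP : URP A) (n0 : ℕ) (hn1 : 1 ≤ n0) (hn0 : n0 ≤ n) :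
    gammaA A n0 ≤
      sSup {r : ℝ | ∃ I : Finset (Fin m), I.Nonempty ∧ I.card ≤ n0 ∧
        r = sMaxSq (A.submatrix id (fun j : {x // x ∈ Iᶜ} => (j : Fin m))) /
            sMinSq (A.submatrix id (fun j : {x // x ∈ I} => (j : Fin m)))} :=
  stmt_0_general hnm A hURP n0 hn0
end

section
/- If A is a real n×m matrix with n < m satisfying the URP, then for every n0 ≤ n the quantity γ_A(n0) is finite; that is, there exists a real constant M such that ‖π_I(s)‖² ≤ M·‖π_{I^c}(s)‖² for every index set I ⊆ {1,…,m} with |I| ≤ n0 and every s ∈ ℝ^m with A s = 0. -/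
open Finset
open scoped BigOperators

/-!
By the URP, a null vector of `A` supported on at most `n` coordinates is zero, so on `ker A`
the restriction to `Iᶜ` is injective whenever `|I| ≤ n`. The restriction to `I` therefore
factors through the restriction to `Iᶜ` by a linear map on a finite-dimensional space, which is
bounded; this gives a constant for each `I`, and there are only finitely many `I`.
-/

open Filter

theorem LinearMap.exists_norm_le_mul_norm_of_injective {𝕜 V E F : Type*}
    [NontriviallyNormedField 𝕜] [CompleteSpace 𝕜] [AddCommGroup V] [Module 𝕜 V]
    [NormedAddCommGroup E] [NormedSpace 𝕜 E] [NormedAddCommGroup F] [NormedSpace 𝕜 F]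
    [FiniteDimensional 𝕜 F] (f : V →ₗ[𝕜] E) {g : V →ₗ[𝕜] F} (hg : Function.Injective g) :
    ∃ C, ∀ v, ‖f v‖ ≤ C * ‖g v‖ := by
  obtain ⟨L, hL⟩ := g.exists_leftInverse_of_injective (LinearMap.ker_eq_bot.2 hg)
  let P := (f ∘ₗ L).toContinuousLinearMap
  refine ⟨‖P‖, fun v => ?_⟩
  calc ‖f v‖ = ‖P (g v)‖ := by simp [P, ← LinearMap.comp_apply L g, hL]
    _ ≤ ‖P‖ * ‖g v‖ := P.le_opNorm _

def euclideanRestrict {ι : Type*} (I : Finset ι) : (ι → ℝ) →ₗ[ℝ] EuclideanSpace ℝ I :=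
  (WithLp.linearEquiv 2 ℝ (I → ℝ)).symm.toLinearMap ∘ₗ LinearMap.funLeft ℝ ℝ Subtype.val

theorem norm_euclideanRestrict_sq {ι : Type*} (I : Finset ι) (s : ι → ℝ) :
    ‖euclideanRestrict I s‖ ^ 2 = ∑ i ∈ I, s i ^ 2 := by
  rw [EuclideanSpace.real_norm_sq_eq, ← Finset.sum_coe_sort I]
  rfl

theorem exists_sum_sq_le_mul_sum_sq_compl {ι : Type*} [Fintype ι] [DecidableEq ι]
    (N : Submodule ℝ (ι → ℝ)) (I : Finset ι) (hN : ∀ s ∈ N, (∀ i ∉ I, s i = 0) → s = 0) :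
    ∃ C, ∀ s ∈ N, ∑ i ∈ I, s i ^ 2 ≤ C * ∑ i ∈ Iᶜ, s i ^ 2 := by
  have hinj : Function.Injective (euclideanRestrict Iᶜ ∘ₗ N.subtype) := by
    rw [← LinearMap.ker_eq_bot, LinearMap.ker_eq_bot']
    intro s hs
    refine Subtype.ext (hN s s.2 fun i hi => ?_)
    exact congrArg (fun v => v ⟨i, Finset.mem_compl.2 hi⟩) hs
  obtain ⟨C, hC⟩ := (euclideanRestrict I ∘ₗ N.subtype).exists_norm_le_mul_norm_of_injective hinj
  refine ⟨C ^ 2, fun s hs => ?_⟩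
  rw [← norm_euclideanRestrict_sq, ← norm_euclideanRestrict_sq, ← mul_pow]
  exact pow_le_pow_left₀ (norm_nonneg _) (hC ⟨s, hs⟩) 2

theorem URP.eq_zero_of_mulVec_eq_zero {n m : ℕ} {A : Matrix (Fin n) (Fin m) ℝ} (hA : URP A)
    (hnm : n ≤ m) {I : Finset (Fin m)} (hI : I.card ≤ n) {s : Fin m → ℝ} (hs : A.mulVec s = 0)
    (hsI : ∀ i ∉ I, s i = 0) : s = 0 := by
  obtain ⟨J, hIJ, hJ⟩ := I.exists_superset_card_eq hI (by simpa using hnm)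
  set g := J.orderEmbOfFin hJ
  have hsg : ∀ j ∉ Set.range g, s j = 0 := by
    rw [J.range_orderEmbOfFin]
    exact fun j hj => hsI j fun hjI => hj (hIJ hjI)
  have hsub : (A.submatrix id g).mulVec (s ∘ g) = 0 := by
    ext i
    rw [← congrFun hs i]
    exact Fintype.sum_of_injective g g.injective _ _ (fun j hj => by simp [hsg j hj])
      fun k => rfl
  have hsg_zero : s ∘ g = 0 :=
    Matrix.mulVec_injective_iff_isUnit.2 (hA g g.injective) (by rw [hsub, Matrix.mulVec_zero])
  ext j
  by_cases hj : j ∈ Set.range g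
  · obtain ⟨k, rfl⟩ := hj
    exact congrFun hsg_zero k
  · exact hsg j hj

/-- under the URP, γ_A(n0) is finite: there is a constant `M` with
‖π_I(s)‖² ≤ M·‖π_{Iᶜ}(s)‖² for all `I` with `|I| ≤ n0` and all null-space vectors `s`. -/
theorem stmt_3 {n m : ℕ} (hnm : n < m) (A : Matrix (Fin n) (Fin m) ℝ)
    (hURP : URP A) (n0 : ℕ) (hn0 : n0 ≤ n) :
    ∃ M : ℝ, ∀ (I : Finset (Fin m)) (s : Fin m → ℝ), I.card ≤ n0 → A.mulVec s = 0 →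
      ∑ i ∈ I, (s i) ^ 2 ≤ M * ∑ i ∈ Iᶜ, (s i) ^ 2 := by
  have hbound : ∀ I : {I : Finset (Fin m) // I.card ≤ n0}, ∀ᶠ M in atTop, ∀ s, A.mulVec s = 0 →
      ∑ i ∈ I.1, s i ^ 2 ≤ M * ∑ i ∈ I.1ᶜ, s i ^ 2 := by
    rintro ⟨I, hI⟩
    obtain ⟨C, hC⟩ := exists_sum_sq_le_mul_sum_sq_compl (LinearMap.ker A.mulVecLin) I
      fun s hs hsI => hURP.eq_zero_of_mulVec_eq_zero hnm.le (hI.trans hn0) hs hsI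
    filter_upwards [eventually_ge_atTop C] with M hM s hs
    exact (hC s hs).trans (by gcongr)
  obtain ⟨M, hM⟩ := (eventually_all.2 hbound).exists
  exact ⟨M, fun I s hI hs => hM ⟨I, hI⟩ s hs⟩
end

section
/- Let A be a real n×m matrix with n < m satisfying the URP, let 1 ≤ n0 ≤ n, let γ = γ_A(n0) (assumed finite and positive), and let σ > 0. If s ∈ ℝ^m satisfies F_{γ,σ}(s) ≥ m − n0/(1+γ), then ‖s‖_{0,σ} ≤ n0, and consequently Σ_{i=1}^m g_γ(s_i/σ)·w_i² ≤ 0 for every w ∈ ℝ^m with A w = 0 (i.e., F_{γ,σ} restricted to {s : A s = x} is concave at every such point). -/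
open Finset
open scoped BigOperators

open Matrix

/-! Let `I = {i : σ < |s i|}`. Each term `f_γ(s_i/σ)` is at most `γ/(1+γ)` on `I` and at most
`1` elsewhere, so `F_{γ,σ}(s) ≤ m - |I|/(1+γ)`, which forces `|I| ≤ n0`. The curvature `g_γ` is
at most `2/(γ²+γ)` on `I` and equals `-2/(1+γ)` off `I`, so the quadratic form is nonpositive
as soon as `‖π_I w‖² ≤ γ ‖π_{Iᶜ} w‖²`, which is the definition of `γ = γ_A(n0)`. URP excludes
the case `π_{Iᶜ} w = 0 ≠ w`, where the ratio is the junk value `x / 0 = 0`. -/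

lemma URP.eq_zero_of_mulVec_eq_zero_s6 {n m : ℕ} {A : Matrix (Fin n) (Fin m) ℝ} (hA : URP A)
    (hnm : n ≤ m) {w : Fin m → ℝ} (hw : A *ᵥ w = 0) {S : Finset (Fin m)} (hS : S.card ≤ n)
    (hsupp : ∀ i ∉ S, w i = 0) : w = 0 := by
  -- enlarge `S` to exactly `n` columns, which form an invertible square submatrix
  obtain ⟨T, hST, hT⟩ := Finset.exists_superset_card_eq hS (by simpa using hnm)
  set g := T.orderEmbOfFin hT
  have hrange : ∀ i ∉ Set.range g, w i = 0 := fun i hi =>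
    hsupp i fun hiS => hi (by simpa [g, Finset.range_orderEmbOfFin] using hST hiS)
  have hsub : A.submatrix id g *ᵥ (w ∘ g) = A *ᵥ w := by
    ext j
    exact Fintype.sum_of_injective g g.injective _ _ (fun i hi => by simp [hrange i hi])
      (fun _ => rfl)
  have hwg : w ∘ g = 0 :=
    Matrix.mulVec_injective_iff_isUnit.mpr (hA g g.injective) (by simpa [hsub] using hw)
  funext i
  by_cases hi : i ∈ Set.range g
  · obtain ⟨k, rfl⟩ := hi
    exact congrFun hwg k
  · exact hrange i hi

lemma sum_sq_le_gammaA_mul {n m : ℕ} {A : Matrix (Fin n) (Fin m) ℝ} (hA : URP A) (hnm : n ≤ m)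
    {n0 : ℕ} (hn0 : n0 ≤ n) (hbdd : BddAbove (gammaSet A n0)) {w : Fin m → ℝ}
    (hw : A *ᵥ w = 0) {I : Finset (Fin m)} (hI : I.card ≤ n0) :
    ∑ i ∈ I, w i ^ 2 ≤ gammaA A n0 * ∑ i ∈ Iᶜ, w i ^ 2 := by
  by_cases hw0 : w = 0
  · simp [hw0]
  have hIc : 0 < ∑ i ∈ Iᶜ, w i ^ 2 := by
    refine (Finset.sum_nonneg fun i _ => sq_nonneg (w i)).lt_of_ne fun h => hw0 ?_
    refine hA.eq_zero_of_mulVec_eq_zero_s6 hnm hw (hI.trans hn0) fun i hi => ?_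
    exact pow_eq_zero_iff two_ne_zero |>.mp <|
      (Finset.sum_eq_zero_iff_of_nonneg fun i _ => sq_nonneg (w i)).mp h.symm i (by simpa using hi)
  rw [← div_le_iff₀ hIc]
  exact le_csSup hbdd ⟨I, w, hI, hw, hw0, rfl⟩

section Spline

variable {γ : ℝ}

lemma fsp_le_one (hγ : 0 < γ) (u : ℝ) : fsp γ u ≤ 1 := by
  unfold fsp
  split_ifs with h1 h2
  · have : 0 ≤ u ^ 2 / (1 + γ) := by positivity
    linarith
  · rw [div_le_one (by positivity)]
    nlinarith
  · exact zero_le_one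

lemma fsp_le_of_one_lt_abs (hγ : 0 < γ) {u : ℝ} (hu : 1 < |u|) :
    fsp γ u ≤ 1 - 1 / (1 + γ) := by
  have h : 1 - 1 / (1 + γ) = γ / (1 + γ) := by field_simp; ring
  rw [fsp, if_neg hu.not_ge, h]
  split_ifs with h2
  · rw [div_le_div_iff₀ (by positivity) (by positivity)]
    nlinarith [mul_nonneg (by linarith : 0 ≤ 2 * γ + 1 - |u|) (by linarith : 0 ≤ |u| - 1)]
  · positivity

lemma gsp_le (hγ : 0 < γ) (u : ℝ) : gsp γ u ≤ 2 / (γ ^ 2 + γ) := by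
  have hpos : 0 < 2 / (γ ^ 2 + γ) := by positivity
  unfold gsp
  split_ifs
  · have : 0 < 2 / (1 + γ) := by positivity
    rw [neg_div]
    linarith
  · rfl
  · exact hpos.le

lemma gsp_of_abs_le_one {u : ℝ} (hu : |u| ≤ 1) : gsp γ u = -2 / (1 + γ) := if_pos hu

end Spline

lemma one_lt_abs_div_iff {σ : ℝ} (hσ : 0 < σ) (x : ℝ) : 1 < |x / σ| ↔ σ < |x| := by
  rw [abs_div, abs_of_pos hσ, one_lt_div hσ]

section Concavity

variable {m : ℕ} {γ σ : ℝ}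

lemma Fsp_le (hγ : 0 < γ) (hσ : 0 < σ) (s : Fin m → ℝ) :
    Fsp γ σ s ≤ m - l0s s σ / (1 + γ) := by
  set I := Finset.univ.filter fun i => σ < |s i|
  have hfI : ∀ i ∈ I, fsp γ (s i / σ) ≤ 1 - 1 / (1 + γ) := fun i hi =>
    fsp_le_of_one_lt_abs hγ ((one_lt_abs_div_iff hσ _).mpr (Finset.mem_filter.mp hi).2)
  have hcard : (I.card : ℝ) + Iᶜ.card = m := by
    exact_mod_cast (Finset.card_add_card_compl I).trans (Fintype.card_fin m)
  calc Fsp γ σ s = ∑ i ∈ I, fsp γ (s i / σ) + ∑ i ∈ Iᶜ, fsp γ (s i / σ) :=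
        (Finset.sum_add_sum_compl I _).symm
    _ ≤ I.card • (1 - 1 / (1 + γ)) + Iᶜ.card • (1 : ℝ) :=
        add_le_add (Finset.sum_le_card_nsmul _ _ _ hfI)
          (Finset.sum_le_card_nsmul _ _ _ fun i _ => fsp_le_one hγ _)
    _ = m - l0s s σ / (1 + γ) := by
        rw [nsmul_eq_mul, nsmul_eq_mul, ← hcard, l0s]
        ring

lemma l0s_le_of_le_Fsp (hγ : 0 < γ) (hσ : 0 < σ) {s : Fin m → ℝ} {k : ℕ}
    (hF : (m : ℝ) - k / (1 + γ) ≤ Fsp γ σ s) : l0s s σ ≤ k := by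
  have h : (l0s s σ : ℝ) / (1 + γ) ≤ k / (1 + γ) := by linarith [hF.trans (Fsp_le hγ hσ s)]
  exact_mod_cast (div_le_div_iff_of_pos_right (by positivity)).mp h

lemma sum_gsp_mul_sq_nonpos (hγ : 0 < γ) (hσ : 0 < σ) {s w : Fin m → ℝ}
    (hw : ∑ i ∈ Finset.univ.filter (fun i => σ < |s i|), w i ^ 2 ≤
      γ * ∑ i ∈ (Finset.univ.filter fun i => σ < |s i|)ᶜ, w i ^ 2) :
    ∑ i, gsp γ (s i / σ) * w i ^ 2 ≤ 0 := by
  set I := Finset.univ.filter fun i => σ < |s i|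
  have hIc : ∀ i ∈ Iᶜ, gsp γ (s i / σ) * w i ^ 2 = -2 / (1 + γ) * w i ^ 2 := fun i hi => by
    rw [gsp_of_abs_le_one (not_lt.mp ((one_lt_abs_div_iff hσ _).not.mpr (by simpa [I] using hi)))]
  calc ∑ i, gsp γ (s i / σ) * w i ^ 2
        = ∑ i ∈ I, gsp γ (s i / σ) * w i ^ 2 + ∑ i ∈ Iᶜ, gsp γ (s i / σ) * w i ^ 2 :=
        (Finset.sum_add_sum_compl I _).symm
    _ ≤ 2 / (γ ^ 2 + γ) * ∑ i ∈ I, w i ^ 2 + -2 / (1 + γ) * ∑ i ∈ Iᶜ, w i ^ 2 := by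
        rw [Finset.sum_congr rfl hIc, Finset.mul_sum, Finset.mul_sum]
        gcongr with i
        exact gsp_le hγ _
    _ ≤ 2 / (γ ^ 2 + γ) * (γ * ∑ i ∈ Iᶜ, w i ^ 2) + -2 / (1 + γ) * ∑ i ∈ Iᶜ, w i ^ 2 := by
        gcongr
    _ = 0 := by
        field_simp
        ring

end Concavity

theorem stmt_6_general {n m : ℕ} (hnm : n < m) (A : Matrix (Fin n) (Fin m) ℝ)
    (hURP : URP A) (n0 : ℕ) (hn0 : n0 ≤ n)
    (γ : ℝ) (hγ : γ = gammaA A n0) (hγpos : 0 < γ) (hbdd : BddAbove (gammaSet A n0))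
    (σ : ℝ) (hσ : 0 < σ) (s : Fin m → ℝ)
    (hF : (m : ℝ) - n0 / (1 + γ) ≤ Fsp γ σ s) :
    l0s s σ ≤ n0 ∧
      ∀ w : Fin m → ℝ, A.mulVec w = 0 → ∑ i, gsp γ (s i / σ) * (w i) ^ 2 ≤ 0 := by
  have hl0s : l0s s σ ≤ n0 := l0s_le_of_le_Fsp hγpos hσ hF
  refine ⟨hl0s, fun w hw => sum_gsp_mul_sq_nonpos hγpos hσ ?_⟩
  rw [hγ]
  exact sum_sq_le_gammaA_mul hURP hnm.le hn0 hbdd hw hl0s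

/-- if F_{γ,σ}(s) ≥ m − n0/(1+γ) then ‖s‖_{0,σ} ≤ n0, and consequently the
Hessian of F_{γ,σ} restricted to the affine solution set is negative semi-definite at s. -/
theorem stmt_6 {n m : ℕ} (hnm : n < m) (A : Matrix (Fin n) (Fin m) ℝ)
    (hURP : URP A) (n0 : ℕ) (hn1 : 1 ≤ n0) (hn0 : n0 ≤ n)
    (γ : ℝ) (hγ : γ = gammaA A n0) (hγpos : 0 < γ) (hbdd : BddAbove (gammaSet A n0))
    (σ : ℝ) (hσ : 0 < σ) (s : Fin m → ℝ)
    (hF : (m : ℝ) - n0 / (1 + γ) ≤ Fsp γ σ s) :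
    l0s s σ ≤ n0 ∧
      ∀ w : Fin m → ℝ, A.mulVec w = 0 → ∑ i, gsp γ (s i / σ) * (w i) ^ 2 ≤ 0 :=
  stmt_6_general hnm A hURP n0 hn0 γ hγ hγpos hbdd σ hσ s hF
end

section
/- Let {f_σ}_{σ>0} be a family of functions ℝ → ℝ satisfying: (1) for every s ≠ 0, f_σ(s) → 0 as σ → 0; (2) f_σ(0) = 1 for all σ > 0; (3) 0 ≤ f_σ(s) ≤ 1 for all σ > 0 and s ∈ ℝ; (4) for every ν > 0 and every α > 0 there exists σ₀ > 0 such that for all 0 < σ < σ₀ and all s with |s| > α one has f_σ(s) < ν. Define F_σ(s) = Σ_{i=1}^m f_σ(s_i) for s ∈ ℝ^m. Let A be a real n×m matrix with n < m satisfying the URP, let x ∈ ℝⁿ, let s0 ∈ S_x satisfy ‖s0‖₀ = k ≤ n/2, and suppose that for each σ > 0, s_σ ∈ S_x satisfies F_σ(s_σ) ≥ m − n + k. Then s_σ → s0 as σ → 0⁺. -/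
open Finset
open scoped BigOperators

/-!
The difference `d = s_σ - s0` lies in the kernel of `A`. Since `F_σ(s_σ) ≥ m - n + k` and every
term is at most `1`, at most `n - k` terms `f_σ(s_σ,i)` can be small; by condition (4) these
include every coordinate with `|s_σ,i| > α` once `σ` is small. So `|d_i| ≤ α` outside a set `I`
of at most `n` indices (those and the support of `s0`). By the URP a kernel vector vanishing
outside `n` coordinates is zero, so restriction to `Iᶜ` is injective on the kernel and, in finite
dimension and over finitely many `I`, `‖d‖ ≤ C ‖d|_{Iᶜ}‖ ≤ C α` with `C` depending only on `A`.
-/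

open Matrix

theorem LinearMap.exists_norm_le_mul_norm_of_injOn {E F : Type*} [NormedAddCommGroup E]
    [NormedSpace ℝ E] [FiniteDimensional ℝ E] [NormedAddCommGroup F] [NormedSpace ℝ F]
    (L : E →ₗ[ℝ] F) (N : Submodule ℝ E) (hL : ∀ x ∈ N, L x = 0 → x = 0) :
    ∃ K : NNReal, ∀ x ∈ N, ‖x‖ ≤ K * ‖L x‖ := by
  obtain ⟨K, -, hK⟩ := (L ∘ₗ N.subtype).exists_antilipschitzWith <| by
    rw [LinearMap.ker_eq_bot']
    exact fun x hx => Subtype.ext (hL x x.2 hx)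
  exact ⟨K, fun x hx => by simpa using hK.le_mul_dist ⟨x, hx⟩ 0⟩

theorem card_filter_lt_le_of_sub_le_sum {ι : Type*} [Fintype ι] {y : ι → ℝ} (hy : ∀ i, y i ≤ 1)
    {r : ℕ} {ν : ℝ} (hν : (r + 1) * ν < 1) (hsum : (Fintype.card ι : ℝ) - r ≤ ∑ i, y i) :
    #{i | y i < ν} ≤ r := by
  set B : Finset ι := {i | y i < ν}
  have hB : ∑ i ∈ B, y i ≤ #B * ν := by
    simpa using sum_le_card_nsmul B y ν fun i hi => (mem_filter.1 hi).2.le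
  have hBc : ∑ i ∈ univ.filter (fun i => ¬ y i < ν), y i ≤ Fintype.card ι - #B := by
    have hcard : (#B : ℝ) + #(univ.filter fun i => ¬ y i < ν) = Fintype.card ι := by
      exact_mod_cast card_filter_add_card_filter_not (s := univ) fun i => y i < ν
    have h := sum_le_card_nsmul (univ.filter fun i => ¬ y i < ν) y 1 fun i _ => hy i
    rw [nsmul_eq_mul, mul_one] at h
    linarith
  rw [← sum_filter_add_sum_filter_not univ fun i => y i < ν] at hsum
  by_contra! hr
  have hr' : (r : ℝ) + 1 ≤ #B := by exact_mod_cast hr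
  nlinarith

namespace URP

variable {n m : ℕ} {A : Matrix (Fin n) (Fin m) ℝ}

theorem eq_zero_of_mulVec_eq_zero_s9 (hA : URP A) (hnm : n ≤ m) {d : Fin m → ℝ} (hd : A *ᵥ d = 0)
    {I : Finset (Fin m)} (hI : #I ≤ n) (hdI : ∀ i ∉ I, d i = 0) : d = 0 := by
  obtain ⟨T, hIT, hT⟩ := exists_superset_card_eq hI (by simpa using hnm)
  set g := T.orderEmbOfFin hT
  have hdg : ∀ i ∉ Set.range g, d i = 0 := fun i hi =>
    hdI i fun h => hi (T.range_orderEmbOfFin hT ▸ hIT h)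
  have hB : A.submatrix id g *ᵥ (d ∘ g) = A.submatrix id g *ᵥ 0 := by
    rw [Matrix.mulVec_zero, ← hd]
    ext r
    exact Fintype.sum_of_injective g g.injective _ _ (fun i hi => by simp [hdg i hi])
      fun _ => rfl
  have hdg0 : d ∘ g = 0 := Matrix.mulVec_injective_iff_isUnit.2 (hA g g.injective) hB
  ext i
  by_cases hi : i ∈ Set.range g
  · obtain ⟨j, rfl⟩ := hi
    exact congrFun hdg0 j
  · exact hdg i hi

theorem exists_norm_le_mul_norm_restrict_compl (hA : URP A) (hnm : n ≤ m) :
    ∃ K : NNReal, ∀ I : Finset (Fin m), #I ≤ n → ∀ d : Fin m → ℝ, A *ᵥ d = 0 →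
      ‖d‖ ≤ K * ‖fun i : ↥Iᶜ => d i‖ := by
  have hI : ∀ I : Finset (Fin m), ∃ K : NNReal, #I ≤ n → ∀ d : Fin m → ℝ, A *ᵥ d = 0 →
      ‖d‖ ≤ K * ‖fun i : ↥Iᶜ => d i‖ := by
    intro I
    by_cases hI : #I ≤ n
    · let L := LinearMap.funLeft ℝ ℝ (Subtype.val : ↥Iᶜ → Fin m)
      obtain ⟨K, hK⟩ := L.exists_norm_le_mul_norm_of_injOn (LinearMap.ker A.mulVecLin)
        fun d hd hdI =>
          hA.eq_zero_of_mulVec_eq_zero_s9 hnm hd hI fun i hi => congrFun hdI ⟨i, mem_compl.2 hi⟩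
      exact ⟨K, fun _ d hd => hK d hd⟩
    · exact ⟨0, fun h => absurd h hI⟩
  choose K hK using hI
  obtain ⟨C, hC⟩ := Finite.exists_le K
  exact ⟨C, fun I hI d hd => (hK I hI d hd).trans (by gcongr; exact hC I)⟩

theorem exists_norm_sub_le (hA : URP A) (hnm : n ≤ m) :
    ∃ C : NNReal, ∀ s s0 : Fin m → ℝ, A *ᵥ s = A *ᵥ s0 → ∀ α : ℝ, 0 ≤ α →
      l0s s α + l0 s0 ≤ n → ‖s - s0‖ ≤ C * α := by
  obtain ⟨C, hC⟩ := hA.exists_norm_le_mul_norm_restrict_compl hnm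
  refine ⟨C, fun s s0 hs α hα hcard => ?_⟩
  set I : Finset (Fin m) := univ.filter (α < |s ·|) ∪ univ.filter (s0 · ≠ 0)
  have hI : #I ≤ n := (card_union_le _ _).trans hcard
  have hd : A *ᵥ (s - s0) = 0 := by rw [Matrix.mulVec_sub, hs, sub_self]
  have hsmall : ‖fun i : ↥Iᶜ => (s - s0) i‖ ≤ α := by
    refine (pi_norm_le_iff_of_nonneg hα).2 fun ⟨i, hi⟩ => ?_
    simp only [I, mem_compl, mem_union, mem_filter_univ, not_or, not_lt, ne_eq, not_not] at hi
    simpa [hi.2] using hi.1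
  exact (hC I hI _ hd).trans (by gcongr)

end URP

theorem stmt_9_general {n m : ℕ} (hnm : n < m) (A : Matrix (Fin n) (Fin m) ℝ) (hURP : URP A)
    (f : ℝ → ℝ → ℝ)
    (h3 : ∀ σ : ℝ, 0 < σ → ∀ s : ℝ, 0 ≤ f σ s ∧ f σ s ≤ 1)
    (h4 : ∀ ν : ℝ, 0 < ν → ∀ a : ℝ, 0 < a → ∃ σ0 : ℝ, 0 < σ0 ∧
      ∀ σ : ℝ, 0 < σ → σ < σ0 → ∀ s : ℝ, a < |s| → f σ s < ν)
    (x : Fin n → ℝ) (s0 : Fin m → ℝ) (hs0x : A.mulVec s0 = x)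
    (k : ℕ) (hk : k = l0 s0) (hk2 : (k : ℝ) ≤ n / 2)
    (sσ : ℝ → Fin m → ℝ) (hsσx : ∀ σ : ℝ, 0 < σ → A.mulVec (sσ σ) = x)
    (hF : ∀ σ : ℝ, 0 < σ → (m : ℝ) - n + k ≤ ∑ i, f σ (sσ σ i)) :
    Filter.Tendsto sσ (nhdsWithin 0 (Set.Ioi 0)) (nhds s0) := by
  obtain ⟨C, hC⟩ := hURP.exists_norm_sub_le hnm.le
  have hkn : k ≤ n := by exact_mod_cast hk2.trans (half_le_self (Nat.cast_nonneg n))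
  set ν : ℝ := 1 / ((n - k : ℕ) + 2)
  have hν : ((n - k : ℕ) + 1) * ν < 1 := by
    rw [mul_one_div, div_lt_one (by positivity)]
    linarith
  rw [Metric.tendsto_nhds]
  intro ε hε
  obtain ⟨σ0, hσ0, hf⟩ := h4 ν (by positivity) (ε / (C + 1)) (by positivity)
  filter_upwards [Ioo_mem_nhdsGT hσ0] with σ ⟨hσ, hσσ0⟩
  have hlarge : l0s (sσ σ) (ε / (C + 1)) ≤ n - k := by
    refine (card_le_card fun i => ?_).trans <|
      card_filter_lt_le_of_sub_le_sum (y := (f σ <| sσ σ ·)) (fun i => (h3 σ hσ _).2) hν ?_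
    · simpa using hf σ hσ hσσ0 (sσ σ i)
    · simpa [Nat.cast_sub hkn, sub_add] using hF σ hσ
  calc dist (sσ σ) s0 = ‖sσ σ - s0‖ := dist_eq_norm _ _
    _ ≤ C * (ε / (C + 1)) :=
      hC _ _ (by rw [hsσx σ hσ, hs0x]) _ (by positivity) (by rw [← hk]; omega)
    _ < ε := by
      rw [mul_div_assoc', div_lt_iff₀ (by positivity)]
      nlinarith

/-- if the family f_σ approximates a Kronecker delta (conditions 1–4) and
s_σ ∈ S_x satisfies F_σ(s_σ) ≥ m − n + k, then s_σ → s0 as σ → 0⁺. -/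
theorem stmt_9 {n m : ℕ} (hnm : n < m) (A : Matrix (Fin n) (Fin m) ℝ) (hURP : URP A)
    (f : ℝ → ℝ → ℝ)
    (h1 : ∀ s : ℝ, s ≠ 0 →
      Filter.Tendsto (fun σ => f σ s) (nhdsWithin 0 (Set.Ioi 0)) (nhds 0))
    (h2 : ∀ σ : ℝ, 0 < σ → f σ 0 = 1)
    (h3 : ∀ σ : ℝ, 0 < σ → ∀ s : ℝ, 0 ≤ f σ s ∧ f σ s ≤ 1)
    (h4 : ∀ ν : ℝ, 0 < ν → ∀ a : ℝ, 0 < a → ∃ σ0 : ℝ, 0 < σ0 ∧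
      ∀ σ : ℝ, 0 < σ → σ < σ0 → ∀ s : ℝ, a < |s| → f σ s < ν)
    (x : Fin n → ℝ) (s0 : Fin m → ℝ) (hs0x : A.mulVec s0 = x)
    (k : ℕ) (hk : k = l0 s0) (hk2 : (k : ℝ) ≤ n / 2)
    (sσ : ℝ → Fin m → ℝ) (hsσx : ∀ σ : ℝ, 0 < σ → A.mulVec (sσ σ) = x)
    (hF : ∀ σ : ℝ, 0 < σ → (m : ℝ) - n + k ≤ ∑ i, f σ (sσ σ i)) :
    Filter.Tendsto sσ (nhdsWithin 0 (Set.Ioi 0)) (nhds s0) :=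
  stmt_9_general hnm A hURP f h3 h4 x s0 hs0x k hk hk2 sσ hsσx hF
end

section
/- For every γ > 0 and σ > 0: the function f_{γ,σ} is differentiable on ℝ with |f_{γ,σ}′(s)| ≤ 2/((1+γ)σ) for all s ∈ ℝ, and consequently for all s1, s2 ∈ ℝ^m, |F_{γ,σ}(s1) − F_{γ,σ}(s2)| ≤ (2√m / ((1+γ)σ)) · ‖s1 − s2‖, where ‖·‖ is the Euclidean norm. -/
open Finset
open scoped BigOperators

/-!
For u ≠ 0, f_γ depends only on |u| through
  f_γ(u) = (((1+γ-|u|)₊)² - (1+γ)((1-|u|)₊)²) / (γ² + γ),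
and x ↦ (x₊)² is C¹ with derivative 2x₊, so f_γ is differentiable away from 0; near 0 it is the
polynomial 1 - u²/(1+γ). On every piece |f_γ'| ≤ 2/(1+γ), so by the mean value theorem f_{γ,σ} is
2/((1+γ)σ)-Lipschitz, and summing over coordinates with Cauchy–Schwarz,
∑ |s1_i - s2_i| ≤ √m ‖s1 - s2‖, gives the bound on F_{γ,σ}.
-/

open Filter Topology

theorem hasDerivAt_sq_max_zero (x : ℝ) :
    HasDerivAt (fun y : ℝ => max 0 y ^ 2) (2 * max 0 x) x := by
  refine hasDerivAt_of_hasDerivAt_of_ne' (g := fun y => 2 * max 0 y) (x := 0) (fun y hy => ?_)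
    (by fun_prop) (by fun_prop) x
  rcases hy.lt_or_gt with hy | hy
  · have hloc : (fun y : ℝ => max 0 y ^ 2) =ᶠ[𝓝 y] fun _ => 0 :=
      eventually_lt_nhds hy |>.mono fun z hz => by simp [max_eq_left hz.le]
    simpa [max_eq_left hy.le] using (hasDerivAt_const y (0 : ℝ)).congr_of_eventuallyEq hloc
  · have hloc : (fun y : ℝ => max 0 y ^ 2) =ᶠ[𝓝 y] fun z => z ^ 2 :=
      eventually_gt_nhds hy |>.mono fun z hz => by simp [max_eq_right hz.le]
    simpa [max_eq_right hy.le] using (hasDerivAt_pow 2 y).congr_of_eventuallyEq hloc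

noncomputable def fspProfile (γ t : ℝ) : ℝ :=
  (max 0 (1 + γ - t) ^ 2 - (1 + γ) * max 0 (1 - t) ^ 2) / (γ ^ 2 + γ)

noncomputable def fspProfileDeriv (γ t : ℝ) : ℝ :=
  2 * ((1 + γ) * max 0 (1 - t) - max 0 (1 + γ - t)) / (γ ^ 2 + γ)

theorem fsp_eq_fspProfile_abs {γ : ℝ} (hγ : 0 < γ) (u : ℝ) : fsp γ u = fspProfile γ |u| := by
  have hγγ : γ ^ 2 + γ ≠ 0 := by positivity
  unfold fsp fspProfile
  split_ifs with h1 h2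
  · rw [max_eq_right (by linarith), max_eq_right (by linarith), ← sq_abs u]
    field_simp
    ring
  · rw [max_eq_right (by linarith), max_eq_left (by linarith)]
    ring
  · rw [max_eq_left (by linarith), max_eq_left (by linarith)]
    simp

theorem fspDeriv_eq_fspProfileDeriv {γ : ℝ} (hγ : 0 < γ) (u : ℝ) :
    fspDeriv γ u = fspProfileDeriv γ |u| * SignType.sign u := by
  have hγγ : γ ^ 2 + γ ≠ 0 := by positivity
  have hsign : SignType.sign u = Real.sign u := by
    rcases lt_trichotomy u 0 with h | h | h <;> simp [h, Real.sign_of_neg, Real.sign_of_pos]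
  rw [fspDeriv, fspProfileDeriv, ← hsign]
  split_ifs with h1 h2
  · rw [max_eq_right (by linarith), max_eq_right (by linarith)]
    field_simp
    linear_combination γ * (1 + γ) * abs_mul_sign u
  · rw [max_eq_left (by linarith), max_eq_right (by linarith)]
    ring
  · rw [max_eq_left (by linarith), max_eq_left (by linarith)]
    simp

theorem hasDerivAt_fspProfile (γ t : ℝ) :
    HasDerivAt (fspProfile γ) (fspProfileDeriv γ t) t := by
  have hout := (hasDerivAt_sq_max_zero (1 + γ - t)).comp t ((hasDerivAt_id t).const_sub (1 + γ))
  have hin := (hasDerivAt_sq_max_zero (1 - t)).comp t ((hasDerivAt_id t).const_sub 1)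
  exact ((hout.sub (hin.const_mul (1 + γ))).div_const (γ ^ 2 + γ)).congr_deriv
    (by unfold fspProfileDeriv; ring)

theorem abs_fspProfileDeriv_le {γ : ℝ} (hγ : 0 < γ) {t : ℝ} (ht : 0 ≤ t) :
    |fspProfileDeriv γ t| ≤ 2 / (1 + γ) := by
  have hkey : |(1 + γ) * max 0 (1 - t) - max 0 (1 + γ - t)| ≤ γ := by
    rcases le_total t 1 with h1 | h1
    · rw [max_eq_right (by linarith), max_eq_right (by linarith), abs_le]
      constructor <;> nlinarith
    rcases le_total t (1 + γ) with h2 | h2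
    · rw [max_eq_left (by linarith), max_eq_right (by linarith), abs_le]
      constructor <;> linarith
    · rw [max_eq_left (by linarith), max_eq_left (by linarith)]
      simpa using hγ.le
  calc |fspProfileDeriv γ t|
      = 2 * |(1 + γ) * max 0 (1 - t) - max 0 (1 + γ - t)| / (γ * (1 + γ)) := by
        rw [fspProfileDeriv, abs_div, abs_of_pos (by positivity : 0 < γ ^ 2 + γ), abs_mul, abs_two]
        ring
    _ ≤ 2 * γ / (γ * (1 + γ)) := by gcongr
    _ = 2 / (1 + γ) := by field_simp

theorem abs_fspDeriv_le {γ : ℝ} (hγ : 0 < γ) (u : ℝ) : |fspDeriv γ u| ≤ 2 / (1 + γ) := by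
  have hsign : |(SignType.sign u : ℝ)| ≤ 1 := by
    rcases lt_trichotomy u 0 with h | h | h <;> simp [h]
  rw [fspDeriv_eq_fspProfileDeriv hγ, abs_mul]
  calc _ ≤ 2 / (1 + γ) * 1 :=
        mul_le_mul (abs_fspProfileDeriv_le hγ (abs_nonneg u)) hsign (abs_nonneg _) (by positivity)
    _ = 2 / (1 + γ) := mul_one _

theorem hasDerivAt_fsp {γ : ℝ} (hγ : 0 < γ) (u : ℝ) : HasDerivAt (fsp γ) (fspDeriv γ u) u := by
  rcases eq_or_ne u 0 with rfl | hu
  · have hloc : fsp γ =ᶠ[𝓝 0] fun y => 1 - y ^ 2 / (1 + γ) :=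
      eventually_of_mem (Ioo_mem_nhds (by norm_num : (-1 : ℝ) < 0) one_pos) fun y hy => by
        rw [fsp, if_pos (abs_le.2 ⟨hy.1.le, hy.2.le⟩)]
    simpa [fspDeriv] using
      (((hasDerivAt_pow 2 (0 : ℝ)).div_const (1 + γ)).const_sub 1).congr_of_eventuallyEq hloc
  · rw [show fsp γ = fspProfile γ ∘ abs from funext (fsp_eq_fspProfile_abs hγ),
      fspDeriv_eq_fspProfileDeriv hγ]
    exact (hasDerivAt_fspProfile γ |u|).comp u (hasDerivAt_abs hu)

section Scaled

variable {γ σ : ℝ}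

theorem hasDerivAt_fsp_div (hγ : 0 < γ) (s : ℝ) :
    HasDerivAt (fun u => fsp γ (u / σ)) (fspDeriv γ (s / σ) / σ) s := by
  have h := (hasDerivAt_fsp hγ (s / σ)).comp s ((hasDerivAt_id s).div_const σ)
  rwa [mul_one_div] at h

theorem abs_fspDeriv_div_le (hγ : 0 < γ) (hσ : 0 < σ) (u : ℝ) :
    |fspDeriv γ u / σ| ≤ 2 / ((1 + γ) * σ) := by
  rw [abs_div, abs_of_pos hσ, ← div_div]
  gcongr
  exact abs_fspDeriv_le hγ u

theorem abs_fsp_div_sub_le (hγ : 0 < γ) (hσ : 0 < σ) (a b : ℝ) :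
    |fsp γ (a / σ) - fsp γ (b / σ)| ≤ 2 / ((1 + γ) * σ) * |a - b| :=
  convex_univ.norm_image_sub_le_of_norm_hasDerivWithin_le
    (fun s _ => (hasDerivAt_fsp_div hγ s).hasDerivWithinAt)
    (fun _ _ => abs_fspDeriv_div_le hγ hσ _) (Set.mem_univ b) (Set.mem_univ a)

end Scaled

theorem sum_abs_le_sqrt_card_mul_sqrt_nsq {ι : Type*} [Fintype ι] (v : ι → ℝ) :
    ∑ i, |v i| ≤ √(Fintype.card ι) * √(nsq v) := by
  rw [← Real.sqrt_mul (Nat.cast_nonneg _)]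
  refine Real.le_sqrt_of_sq_le ?_
  simpa [nsq, sq_abs] using sq_sum_le_card_mul_sum_sq (s := Finset.univ) (f := fun i => |v i|)

theorem abs_sum_comp_sub_sum_comp_le {ι : Type*} [Fintype ι] {g : ℝ → ℝ} {C : ℝ} (hC : 0 ≤ C)
    (hg : ∀ a b, |g a - g b| ≤ C * |a - b|) (x y : ι → ℝ) :
    |∑ i, g (x i) - ∑ i, g (y i)| ≤ C * √(Fintype.card ι) * √(nsq (x - y)) :=
  calc |∑ i, g (x i) - ∑ i, g (y i)|
      ≤ ∑ i, |g (x i) - g (y i)| := by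
        rw [← Finset.sum_sub_distrib]
        exact Finset.abs_sum_le_sum_abs _ _
    _ ≤ C * ∑ i, |(x - y) i| := by
        rw [Finset.mul_sum]
        exact Finset.sum_le_sum fun i _ => hg (x i) (y i)
    _ ≤ C * √(Fintype.card ι) * √(nsq (x - y)) := by
        rw [mul_assoc]
        exact mul_le_mul_of_nonneg_left (sum_abs_le_sqrt_card_mul_sqrt_nsq _) hC

/-- f_{γ,σ} is differentiable with derivative bounded by 2/((1+γ)σ), and
consequently F_{γ,σ} is Lipschitz with constant 2√m/((1+γ)σ) w.r.t. the Euclidean norm. -/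
theorem stmt_11 {m : ℕ} (γ σ : ℝ) (hγ : 0 < γ) (hσ : 0 < σ) :
    (∀ s : ℝ, ∃ d : ℝ, HasDerivAt (fun u : ℝ => fsp γ (u / σ)) d s ∧
      |d| ≤ 2 / ((1 + γ) * σ)) ∧
    ∀ s1 s2 : Fin m → ℝ,
      |Fsp γ σ s1 - Fsp γ σ s2| ≤
        2 * Real.sqrt m / ((1 + γ) * σ) * Real.sqrt (nsq (s1 - s2)) := by
  refine ⟨fun s => ⟨_, hasDerivAt_fsp_div hγ s, abs_fspDeriv_div_le hγ hσ _⟩, fun s1 s2 => ?_⟩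
  have hC : 0 ≤ 2 / ((1 + γ) * σ) := by positivity
  have hsum := abs_sum_comp_sub_sum_comp_le hC (abs_fsp_div_sub_le hγ hσ) s1 s2
  rw [Fintype.card_fin] at hsum
  calc |Fsp γ σ s1 - Fsp γ σ s2| ≤ 2 / ((1 + γ) * σ) * √m * √(nsq (s1 - s2)) := hsum
    _ = 2 * √m / ((1 + γ) * σ) * √(nsq (s1 - s2)) := by ring
end

section
/- Let γ > 0, σ > 0, and let A₀, B₀ be constants with 0 ≤ A₀ ≤ B₀, and set c = 2m/(2m + B₀ − A₀). Then: (i) for every s ∈ ℝ^m, if F_{γ,σ}(s) ≥ m − A₀ then F_{γ,cσ}(s) ≥ m − B₀; and (ii) for every s ∈ ℝ^m, F_{γ,σ}(s) ≥ m − ‖s‖²/((1+γ)σ²), where ‖·‖ is the Euclidean norm. -/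
open Finset
open scoped BigOperators

/-!
On `[0, ∞)` the spline `f_γ` is `2/(1+γ)`-Lipschitz (its slope is steepest at `|u| = 1`) and it
vanishes beyond `1+γ`. Replacing `u` by `u/c` moves `|u| ≤ 1+γ` by `|u|(1/c - 1) ≤ (1+γ)(1-c)/c`,
so shrinking the scale from `σ` to `cσ` lowers each term by at most `2(1-c)/c`, and
`c = 2m/(2m + B₀ - A₀)` makes the total cost `m · 2(1-c)/c = B₀ - A₀`. The lower bound `1 - u²/(1+γ) ≤ f_γ(u)` is the quadratic piece
extended to all of `ℝ`; summing it gives the second claim.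
-/

section

variable {m : ℕ} {γ : ℝ}

lemma fsp_abs (u : ℝ) : fsp γ |u| = fsp γ u := by
  simp only [fsp, abs_abs, sq_abs]

lemma fsp_nonneg (hγ : 0 < γ) (u : ℝ) : 0 ≤ fsp γ u := by
  unfold fsp
  split_ifs with h₁
  · rw [sub_nonneg, div_le_one (by linarith), ← sq_abs]
    nlinarith [abs_nonneg u]
  · positivity
  · exact le_rfl

lemma one_sub_sq_div_le_fsp (hγ : 0 < γ) (u : ℝ) : 1 - u ^ 2 / (1 + γ) ≤ fsp γ u := by
  have hβ : 0 < 1 + γ := by linarith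
  rw [← fsp_abs, ← sq_abs]
  unfold fsp
  simp only [abs_abs]
  split_ifs with h₁ h₂
  · exact le_rfl
  · field_simp
    nlinarith [mul_nonneg hγ.le (sq_nonneg (|u| - 1))]
  · rw [sub_nonpos, le_div_iff₀ hβ]
    nlinarith

lemma fsp_sub_fsp_le_of_le (hγ : 0 < γ) {a b : ℝ} (ha : 0 ≤ a) (hab : a ≤ b) :
    fsp γ a - fsp γ b ≤ 2 * (b - a) / (1 + γ) := by
  have hb : 0 ≤ b := ha.trans hab
  have hfb := fsp_nonneg hγ b
  unfold fsp at hfb ⊢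
  rw [abs_of_nonneg ha, abs_of_nonneg hb] at *
  have hγβ : γ ^ 2 + γ = γ * (1 + γ) := by ring
  rw [hγβ] at *
  -- the only case beyond linear arithmetic is `a ≤ 1 < b ≤ 1+γ`, where after clearing
  -- denominators the gap is `γ(1-a)² + (b-1)²`
  split_ifs at * <;> first
    | linarith
    | (field_simp; nlinarith [mul_nonneg hγ.le (sq_nonneg (1 - a))])

lemma fsp_sub_fsp_div_le (hγ : 0 < γ) {c : ℝ} (hc0 : 0 < c) (hc1 : c ≤ 1) (u : ℝ) :
    fsp γ u - fsp γ (u / c) ≤ 2 * (1 - c) / c := by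
  have hβ : 0 < 1 + γ := by linarith
  have hslack : 0 ≤ 2 * (1 - c) / c := div_nonneg (by linarith) hc0.le
  rw [← fsp_abs u, ← fsp_abs (u / c), abs_div, abs_of_pos hc0]
  by_cases hu : |u| ≤ 1 + γ
  · have hle : |u| ≤ |u| / c := le_div_self (abs_nonneg u) hc0 hc1
    calc fsp γ |u| - fsp γ (|u| / c) ≤ 2 * (|u| / c - |u|) / (1 + γ) :=
          fsp_sub_fsp_le_of_le hγ (abs_nonneg u) hle
      _ = 2 * (1 - c) / c * (|u| / (1 + γ)) := by field_simp
      _ ≤ 2 * (1 - c) / c * 1 :=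
          mul_le_mul_of_nonneg_left ((div_le_one hβ).2 hu) hslack
      _ = 2 * (1 - c) / c := mul_one _
  · have hzero : fsp γ |u| = 0 := by
      simp only [fsp, abs_abs, if_neg hu, if_neg (fun h : |u| ≤ 1 => hu (by linarith))]
    linarith [fsp_nonneg hγ (|u| / c)]

lemma Fsp_sub_Fsp_mul_le (hγ : 0 < γ) {c : ℝ} (hc0 : 0 < c) (hc1 : c ≤ 1) (σ : ℝ)
    (s : Fin m → ℝ) : Fsp γ σ s - Fsp γ (c * σ) s ≤ m * (2 * (1 - c) / c) := by
  unfold Fsp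
  rw [← Finset.sum_sub_distrib]
  calc ∑ i, (fsp γ (s i / σ) - fsp γ (s i / (c * σ)))
      ≤ ∑ _i : Fin m, 2 * (1 - c) / c := by
        refine Finset.sum_le_sum fun i _ => ?_
        rw [mul_comm, ← div_div]
        exact fsp_sub_fsp_div_le hγ hc0 hc1 _
    _ = m * (2 * (1 - c) / c) := by simp

lemma sub_nsq_div_le_Fsp (hγ : 0 < γ) (σ : ℝ) (s : Fin m → ℝ) :
    m - nsq s / ((1 + γ) * σ ^ 2) ≤ Fsp γ σ s := by
  calc (m : ℝ) - nsq s / ((1 + γ) * σ ^ 2) = ∑ i, (1 - (s i / σ) ^ 2 / (1 + γ)) := by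
        simp only [Finset.sum_sub_distrib, nsq, Finset.sum_div, div_pow, div_div, mul_comm (σ ^ 2)]
        simp
    _ ≤ Fsp γ σ s := Finset.sum_le_sum fun i _ => one_sub_sq_div_le_fsp hγ _

end

theorem stmt_12_general {m : ℕ} (hm : 0 < m) (γ σ : ℝ) (hγ : 0 < γ)
    (A0 B0 : ℝ) (hAB : A0 ≤ B0) :
    (∀ s : Fin m → ℝ, (m : ℝ) - A0 ≤ Fsp γ σ s →
      (m : ℝ) - B0 ≤ Fsp γ (2 * m / (2 * m + B0 - A0) * σ) s) ∧
    ∀ s : Fin m → ℝ, (m : ℝ) - nsq s / ((1 + γ) * σ ^ 2) ≤ Fsp γ σ s := by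
  refine ⟨fun s hs => ?_, sub_nsq_div_le_Fsp hγ σ⟩
  have hm0 : (0 : ℝ) < m := Nat.cast_pos.2 hm
  have hden : (0 : ℝ) < 2 * m + B0 - A0 := by linarith
  set c : ℝ := 2 * m / (2 * m + B0 - A0) with hc
  have hc0 : 0 < c := by positivity
  have hc1 : c ≤ 1 := by rw [hc, div_le_one hden]; linarith
  have hcost : (m : ℝ) * (2 * (1 - c) / c) = B0 - A0 := by
    rw [hc, one_sub_div hden.ne', mul_div_assoc, div_div_div_cancel_right₀ hden.ne']
    field_simp
    ring
  linarith [Fsp_sub_Fsp_mul_le hγ hc0 hc1 σ s]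

/-- with c = 2m/(2m + B₀ − A₀), if F_{γ,σ}(s) ≥ m − A₀ then
F_{γ,cσ}(s) ≥ m − B₀; and F_{γ,σ}(s) ≥ m − ‖s‖²/((1+γ)σ²) always. -/
theorem stmt_12 {m : ℕ} (hm : 0 < m) (γ σ : ℝ) (hγ : 0 < γ) (hσ : 0 < σ)
    (A0 B0 : ℝ) (hA0 : 0 ≤ A0) (hAB : A0 ≤ B0) :
    (∀ s : Fin m → ℝ, (m : ℝ) - A0 ≤ Fsp γ σ s →
      (m : ℝ) - B0 ≤ Fsp γ (2 * m / (2 * m + B0 - A0) * σ) s) ∧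
    ∀ s : Fin m → ℝ, (m : ℝ) - nsq s / ((1 + γ) * σ ^ 2) ≤ Fsp γ σ s :=
  stmt_12_general hm γ σ hγ A0 B0 hAB
end
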